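/- Fix c1 > 0. There exists a constant C0 > 0, depending only on c1, such that for all integers m ≥ 3, n ≥ 3, every real u ≥ 1, and every integer K ≥ 1, the second-order Ditzian–Totik modulus of smoothness of f(p,q) = p·ln q on the convex polytope R = {(p,q) ∈ [0,1]² : p ≤ 2c1·ln m/m, q ≤ 4c1·ln n/n, p ≤ u·q} (with f(0,0) := 0, which makes f continuous on R) satisfies ω²_R(f, 1/K) ≤ C0·u·ln n/(K²·n). -/

import Mathlib

open scoped BigOperators

noncomputable section

/-- The normalized distance `d̃_K(e,x) = √(‖x − A‖ ‖x − B‖)`, where `A, B` are the two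
intersections of the line through `x` with (unit) direction `e` with `K`. Writing
`{s : ℝ | x + s • e ∈ K} = [s₋, s₊]` (with `s₋ ≤ 0 ≤ s₊` for `x ∈ K`, `K` compact
convex), one has `‖x − A‖ = −s₋` and `‖x − B‖ = s₊`, so
`d̃_K(e,x) = √(s₊ · (−s₋))`. -/
def dtDist (K : Set (EuclideanSpace ℝ (Fin 2))) (e x : EuclideanSpace ℝ (Fin 2)) : ℝ :=
  Real.sqrt (sSup {s : ℝ | x + s • e ∈ K} * (-sInf {s : ℝ | x + s • e ∈ K}))

/-- The second symmetric difference `Δ²_v f(x) = f(x+v) − 2 f(x) + f(x−v)` if both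
`x + v` and `x − v` lie in `K`, and `0` otherwise. -/
def symmDiff2 (K : Set (EuclideanSpace ℝ (Fin 2))) (f : EuclideanSpace ℝ (Fin 2) → ℝ)
    (x v : EuclideanSpace ℝ (Fin 2)) : ℝ :=
  open scoped Classical in
  if x + v ∈ K ∧ x - v ∈ K then f (x + v) - 2 * f x + f (x - v) else 0

/-- The second-order Ditzian–Totik modulus of smoothness:
`ω²_K(f,t) = sup_{‖e‖=1} sup_{x ∈ K} sup_{0 ≤ h ≤ t} |Δ²_{h d̃_K(e,x) e} f(x)|`. -/
def dtModulus (K : Set (EuclideanSpace ℝ (Fin 2))) (f : EuclideanSpace ℝ (Fin 2) → ℝ)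
    (t : ℝ) : ℝ :=
  sSup {r : ℝ | ∃ (e x : EuclideanSpace ℝ (Fin 2)) (h : ℝ),
    ‖e‖ = 1 ∧ x ∈ K ∧ 0 ≤ h ∧ h ≤ t ∧
    r = |symmDiff2 K f x ((h * dtDist K e x) • e)|}

/-- The polytope `R = {(p,q) ∈ [0,1]² : p ≤ 2c₁ ln m/m, q ≤ 4c₁ ln n/n, p ≤ u q}`
(coordinates: `x 0 = p`, `x 1 = q`). -/
def approxPolytope (c1 : ℝ) (m n : ℕ) (u : ℝ) : Set (EuclideanSpace ℝ (Fin 2)) :=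
  {x | 0 ≤ x 0 ∧ x 0 ≤ 1 ∧ 0 ≤ x 1 ∧ x 1 ≤ 1 ∧
    x 0 ≤ 2 * c1 * Real.log m / m ∧ x 1 ≤ 4 * c1 * Real.log n / n ∧ x 0 ≤ u * x 1}


/-! Along the chord of direction `e` through `x ∈ K`, the endpoints `x + s • e` and `x + r • e`
(`r ≤ 0 ≤ s`, so that `d̃² = s · (-r)`) lie in any slab `0 ≤ y i ≤ M` containing `K`, which forces
`s · (-r) · (e i)² ≤ x i · (M - x i)`. Hence a Ditzian–Totik step `v = h d̃ e` from `(p, q) ∈ R`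
satisfies `b² ≤ q ε` and `a² ≤ p u ε`, where `(a, b) = v` and `ε = 4 c₁ h² ln n / n`.

The second difference of `p log q` with such a step is at most `5 u ε`. If `b ≤ q / 2` it splits
into a slope term `a (log (q + b) - log (q - b))`, of size `|a| b / q`, and a curvature term
`p (2 log q - log (q + b) - log (q - b))`, of size `p b² / q²`. If `b ≥ q / 2`, the step is as
large as the point itself, and each one-sided difference `(p ± a) (log (q ± b) - log q)` is
`O(u b) = O(u ε)`. -/

open Real Set Topology

lemma mul_neg_mul_sq_le_of_mem_Icc {y M s r c : ℝ} (hs : 0 ≤ s) (hr : r ≤ 0)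
    (hsM : y + s * c ∈ Icc 0 M) (hrM : y + r * c ∈ Icc 0 M) :
    s * -r * c ^ 2 ≤ y * (M - y) := by
  obtain ⟨hs0, hsM⟩ := hsM
  obtain ⟨hr0, hrM⟩ := hrM
  rcases le_total 0 c with hc | hc
  · nlinarith [mul_nonneg hs hc, mul_nonneg (neg_nonneg.2 hr) hc]
  · nlinarith [mul_nonneg_of_nonpos_of_nonpos hr hc, mul_nonneg hs (neg_nonneg.2 hc)]

lemma exists_sq_dtDist_eq {K : Set (EuclideanSpace ℝ (Fin 2))} (hK : IsCompact K)
    {e x : EuclideanSpace ℝ (Fin 2)} (he : e ≠ 0) (hx : x ∈ K) :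
    ∃ s r : ℝ, 0 ≤ s ∧ r ≤ 0 ∧ x + s • e ∈ K ∧ x + r • e ∈ K ∧
      dtDist K e x ^ 2 = s * -r := by
  set S := {s : ℝ | x + s • e ∈ K}
  have hS : IsCompact S :=
    ((Homeomorph.addLeft x).isClosedEmbedding.comp
      (isClosedEmbedding_smul_left he)).isCompact_preimage hK
  have h0 : (0 : ℝ) ∈ S := by simpa [S] using hx
  have hSup : 0 ≤ sSup S := le_csSup hS.bddAbove h0
  have hInf : sInf S ≤ 0 := csInf_le hS.bddBelow h0
  exact ⟨sSup S, sInf S, hSup, hInf, hS.sSup_mem ⟨0, h0⟩, hS.sInf_mem ⟨0, h0⟩,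
    Real.sq_sqrt (mul_nonneg hSup (neg_nonneg.2 hInf))⟩

lemma sq_dtDist_mul_apply_le {K : Set (EuclideanSpace ℝ (Fin 2))} (hK : IsCompact K)
    {e x : EuclideanSpace ℝ (Fin 2)} (he : e ≠ 0) (hx : x ∈ K) {i : Fin 2} {M : ℝ}
    (hKM : ∀ y ∈ K, y i ∈ Icc 0 M) :
    (dtDist K e x * e i) ^ 2 ≤ x i * (M - x i) := by
  obtain ⟨s, r, hs, hr, hsK, hrK, hd⟩ := exists_sq_dtDist_eq hK he hx
  rw [mul_pow, hd]
  exact mul_neg_mul_sq_le_of_mem_Icc hs hr (hKM _ hsK) (hKM _ hrK)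

lemma sq_smul_apply_le {K : Set (EuclideanSpace ℝ (Fin 2))} (hK : IsCompact K)
    {e x : EuclideanSpace ℝ (Fin 2)} (he : e ≠ 0) (hx : x ∈ K) {i : Fin 2} {M : ℝ}
    (hKM : ∀ y ∈ K, y i ∈ Icc 0 M) (h : ℝ) :
    ((h * dtDist K e x) • e) i ^ 2 ≤ x i * (M * h ^ 2) := by
  have hD := sq_dtDist_mul_apply_le hK he hx hKM
  have hxi := (hKM x hx).1
  calc ((h * dtDist K e x) • e) i ^ 2 = h ^ 2 * (dtDist K e x * e i) ^ 2 := by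
        simp only [PiLp.smul_apply, smul_eq_mul]; ring
    _ ≤ h ^ 2 * (x i * (M - x i)) := by gcongr
    _ ≤ x i * (M * h ^ 2) := by nlinarith [mul_nonneg (sq_nonneg h) (mul_nonneg hxi hxi)]

lemma isCompact_approxPolytope (c1 : ℝ) (m n : ℕ) (u : ℝ) :
    IsCompact (approxPolytope c1 m n u) := by
  have hclosed : IsClosed (approxPolytope c1 m n u) := by
    simp only [approxPolytope, Set.ofPred_and]
    repeat' apply IsClosed.inter
    all_goals exact isClosed_le (by fun_prop) (by fun_prop)
  refine (((EuclideanSpace.equiv (Fin 2) ℝ).toHomeomorph.isCompact_preimage).2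
    (isCompact_Icc (a := 0) (b := 1))).of_isClosed_subset hclosed ?_
  rintro x ⟨h0, h0', h1, h1', -⟩
  constructor <;> intro i <;> fin_cases i <;> simpa

lemma approxPolytope_apply_one_mem_Icc {c1 : ℝ} {m n : ℕ} {u : ℝ} {y : EuclideanSpace ℝ (Fin 2)}
    (hy : y ∈ approxPolytope c1 m n u) : y 1 ∈ Icc 0 (4 * c1 * log n / n) :=
  ⟨hy.2.2.1, hy.2.2.2.2.2.1⟩

lemma approxPolytope_apply_zero_mem_Icc {c1 : ℝ} {m n : ℕ} {u : ℝ} (hu : 0 ≤ u)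
    {y : EuclideanSpace ℝ (Fin 2)} (hy : y ∈ approxPolytope c1 m n u) :
    y 0 ∈ Icc 0 (u * (4 * c1 * log n / n)) :=
  ⟨hy.1, hy.2.2.2.2.2.2.trans (mul_le_mul_of_nonneg_left hy.2.2.2.2.2.1 hu)⟩

lemma log_sub_log_le_div {x y : ℝ} (hx : 0 < x) (hy : 0 < y) :
    log y - log x ≤ (y - x) / x := by
  rw [← log_div hy.ne' hx.ne']
  exact (log_le_sub_one_of_pos (div_pos hy hx)).trans_eq (by field_simp)

lemma mul_log_sub_log_mem_Icc {r x y u : ℝ} (hu : 0 ≤ u) (hr : 0 ≤ r) (hry : r ≤ u * y)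
    (hy : 0 ≤ y) (hyx : y ≤ x) : r * (log x - log y) ∈ Icc 0 (u * (x - y)) := by
  rcases hy.eq_or_lt with rfl | hy
  · obtain rfl : r = 0 := by linarith
    simpa using mul_nonneg hu hyx
  have hlog : 0 ≤ log x - log y := sub_nonneg.2 (log_le_log hy hyx)
  refine ⟨mul_nonneg hr hlog, ?_⟩
  calc r * (log x - log y) ≤ u * y * ((x - y) / y) :=
        mul_le_mul hry (log_sub_log_le_div hy (hy.trans_le hyx)) hlog (by positivity)
    _ = u * (x - y) := by field_simp

/-- `Δ²_{(a,b)} f (p,q)` for `f (p,q) = p log q`. -/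
def mulLogSecondDiff (p q a b : ℝ) : ℝ :=
  (p + a) * log (q + b) - 2 * (p * log q) + (p - a) * log (q - b)

lemma mulLogSecondDiff_neg (p q a b : ℝ) :
    mulLogSecondDiff p q (-a) (-b) = mulLogSecondDiff p q a b := by
  simp only [mulLogSecondDiff, ← sub_eq_add_neg, sub_neg_eq_add]
  ring

section

variable {p q a b u ε : ℝ}

lemma abs_mulLogSecondDiff_le_of_two_mul_le (hq : 0 < q) (hb : 0 ≤ b) (hbq : 2 * b ≤ q)
    (hp : 0 ≤ p) (hpq : p ≤ u * q) (hbε : b ^ 2 ≤ q * ε) (haε : a ^ 2 ≤ p * u * ε) :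
    |mulLogSecondDiff p q a b| ≤ 5 * u * ε := by
  have hu : 0 ≤ u := nonneg_of_mul_nonneg_left (hp.trans hpq) hq
  have hε : 0 ≤ ε := nonneg_of_mul_nonneg_right ((sq_nonneg b).trans hbε) hq
  have hqm : 0 < q - b := by linarith
  have hqp : 0 < q + b := by linarith
  have hab : |a| * b ≤ u * q * ε := by
    refine le_of_pow_le_pow_left₀ two_ne_zero (by positivity) ?_
    calc (|a| * b) ^ 2 = a ^ 2 * b ^ 2 := by rw [mul_pow, sq_abs]
      _ ≤ (p * u * ε) * (q * ε) := by gcongr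
      _ ≤ (u * q * u * ε) * (q * ε) := by gcongr
      _ = (u * q * ε) ^ 2 := by ring
  have hslope : log (q + b) - log (q - b) ≤ 3 * b / q := by
    have hup : log (q + b) - log q ≤ b / q := (log_sub_log_le_div hq hqp).trans_eq (by ring)
    have hdown : log q - log (q - b) ≤ 2 * b / q :=
      (log_sub_log_le_div hqm hq).trans (by rw [div_le_div_iff₀ hqm hq]; nlinarith)
    rw [show 3 * b / q = b / q + 2 * b / q by ring]
    linarith
  have hslope₀ : 0 ≤ log (q + b) - log (q - b) := sub_nonneg.2 (log_le_log hqm (by linarith))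
  have hcurv : 2 * log q - log (q + b) - log (q - b) ≤ 2 * b ^ 2 / q ^ 2 := by
    have h := log_sub_log_le_div (mul_pos hqp hqm) (pow_pos hq 2)
    rw [log_mul hqp.ne' hqm.ne', log_pow] at h
    push_cast at h
    calc 2 * log q - log (q + b) - log (q - b)
        ≤ (q ^ 2 - (q + b) * (q - b)) / ((q + b) * (q - b)) := by linarith
      _ ≤ 2 * b ^ 2 / q ^ 2 := by
        rw [div_le_div_iff₀ (by positivity) (by positivity)]
        nlinarith [mul_nonneg (sq_nonneg b) (show 0 ≤ q ^ 2 - 2 * b ^ 2 by nlinarith)]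
  have hcurv₀ : 0 ≤ 2 * log q - log (q + b) - log (q - b) := by
    have h := log_le_log (mul_pos hqp hqm) (show (q + b) * (q - b) ≤ q ^ 2 by nlinarith)
    rw [log_mul hqp.ne' hqm.ne', log_pow] at h
    push_cast at h
    linarith
  have hsplit : mulLogSecondDiff p q a b =
      a * (log (q + b) - log (q - b)) - p * (2 * log q - log (q + b) - log (q - b)) := by
    unfold mulLogSecondDiff; ring
  rw [hsplit]
  calc _ ≤ |a| * (log (q + b) - log (q - b)) + p * (2 * log q - log (q + b) - log (q - b)) := by
        refine (abs_sub _ _).trans_eq ?_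
        rw [abs_mul, abs_mul, abs_of_nonneg hslope₀, abs_of_nonneg hp, abs_of_nonneg hcurv₀]
    _ ≤ |a| * (3 * b / q) + p * (2 * b ^ 2 / q ^ 2) := by gcongr
    _ ≤ 3 * u * ε + 2 * u * ε := by
        have hfirst : |a| * (3 * b / q) ≤ 3 * u * ε := by
          rw [mul_div_assoc', div_le_iff₀ hq]; nlinarith
        have hsecond : p * (2 * b ^ 2 / q ^ 2) ≤ 2 * u * ε := by
          rw [mul_div_assoc', div_le_iff₀ (by positivity)]
          nlinarith [mul_le_mul hpq hbε (by positivity) (by positivity)]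
        exact add_le_add hfirst hsecond
    _ = 5 * u * ε := by ring

lemma abs_mulLogSecondDiff_le_of_le_two_mul (hu : 0 ≤ u) (hε : 0 ≤ ε) (hb : 0 ≤ b)
    (hqb : q ≤ 2 * b) (hbq : b ≤ q) (hpa : 0 ≤ p + a) (hpa' : 0 ≤ p - a)
    (hupa : p + a ≤ u * (q + b)) (hupa' : p - a ≤ u * (q - b)) (hbε : b ^ 2 ≤ q * ε) :
    |mulLogSecondDiff p q a b| ≤ 5 * u * ε := by
  have hbε' : u * b ≤ u * (2 * ε) := mul_le_mul_of_nonneg_left (by nlinarith) hu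
  obtain ⟨hX₀, hX⟩ := mul_log_sub_log_mem_Icc (x := q + b) (y := q) (mul_nonneg two_pos.le hu) hpa
    (by nlinarith) (by linarith) (by linarith)
  obtain ⟨hY₀, hY⟩ := mul_log_sub_log_mem_Icc (x := q) hu hpa' hupa' (by linarith) (by linarith)
  have hsplit : mulLogSecondDiff p q a b =
      (p + a) * (log (q + b) - log q) - (p - a) * (log q - log (q - b)) := by
    unfold mulLogSecondDiff; ring
  rw [hsplit, abs_sub_le_iff]
  constructor <;> linarith

theorem abs_mulLogSecondDiff_le (hu : 0 ≤ u) (hε : 0 ≤ ε) (hqb : 0 ≤ q - b) (hqb' : 0 ≤ q + b)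
    (hpa : 0 ≤ p + a) (hpa' : 0 ≤ p - a) (hupa : p + a ≤ u * (q + b))
    (hupa' : p - a ≤ u * (q - b)) (hbε : b ^ 2 ≤ q * ε) (haε : a ^ 2 ≤ p * u * ε) :
    |mulLogSecondDiff p q a b| ≤ 5 * u * ε := by
  wlog hb : 0 ≤ b generalizing a b
  · rw [← mulLogSecondDiff_neg]
    exact this (by linarith) (by linarith) (by linarith) (by linarith) (by linarith)
      (by linarith) (by rwa [neg_sq]) (by rwa [neg_sq]) (by linarith)
  rcases le_or_gt q (2 * b) with hqb₂ | hqb₂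
  · exact abs_mulLogSecondDiff_le_of_le_two_mul hu hε hb hqb₂ (by linarith) hpa hpa' hupa hupa'
      hbε
  · exact abs_mulLogSecondDiff_le_of_two_mul_le (by linarith) hb hqb₂.le (by linarith)
      (by nlinarith) hbε haε

end

/-- Ditzian–Totik modulus bound for `f(p,q) = p ln q` on the polytope `R`:
`ω²_R(f, 1/K) ≤ C₀ u ln n / (K² n)`, with `C₀` depending only on `c₁`.
(Here `f(0,0) = 0` holds automatically since `Real.log 0 = 0`, and whenever
`q = 0` in `R` one has `p = 0`.) -/
theorem dt_modulus_p_log_q (c1 : ℝ) (hc1 : 0 < c1) :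
    ∃ C0 : ℝ, 0 < C0 ∧
      ∀ (m n : ℕ) (u : ℝ) (K : ℕ), 3 ≤ m → 3 ≤ n → 1 ≤ u → 1 ≤ K →
        dtModulus (approxPolytope c1 m n u)
            (fun x : EuclideanSpace ℝ (Fin 2) => x 0 * Real.log (x 1)) (1 / K) ≤
          C0 * u * Real.log n / ((K : ℝ) ^ 2 * n) := by
  refine ⟨20 * c1, by positivity, fun m n u K _ hn hu hK => ?_⟩
  set R := approxPolytope c1 m n u
  set Q := 4 * c1 * log n / n with hQ
  have hlog : 0 < log n := log_pos (by exact_mod_cast (by omega : 1 < n))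
  have hu0 : 0 ≤ u := by linarith
  have hRHS : 0 ≤ 20 * c1 * u * log n / ((K : ℝ) ^ 2 * n) := by positivity
  refine Real.sSup_le ?_ hRHS
  rintro _ ⟨e, x, h, he, hx, hh0, hhK, rfl⟩
  have he0 : e ≠ 0 := ne_zero_of_norm_ne_zero (by rw [he]; exact one_ne_zero)
  set v := (h * dtDist R e x) • e
  have hR := isCompact_approxPolytope c1 m n u
  have hb : v 1 ^ 2 ≤ x 1 * (Q * h ^ 2) :=
    sq_smul_apply_le hR he0 hx (fun _ ↦ approxPolytope_apply_one_mem_Icc) h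
  have ha : v 0 ^ 2 ≤ x 0 * u * (Q * h ^ 2) := by
    rw [mul_assoc, ← mul_assoc u]
    exact sq_smul_apply_le hR he0 hx (fun _ ↦ approxPolytope_apply_zero_mem_Icc hu0) h
  unfold symmDiff2
  split_ifs with hmem
  · obtain ⟨⟨hpa, -, hqb', -, -, -, hupa⟩, ⟨hpa', -, hqb, -, -, -, hupa'⟩⟩ := hmem
    calc _ = |mulLogSecondDiff (x 0) (x 1) (v 0) (v 1)| := rfl
      _ ≤ 5 * u * (Q * h ^ 2) :=
          abs_mulLogSecondDiff_le hu0 (by positivity) hqb hqb' hpa hpa' hupa hupa' hb ha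
      _ ≤ 5 * u * (Q * (1 / K) ^ 2) := by gcongr
      _ = 20 * c1 * u * log n / ((K : ℝ) ^ 2 * n) := by rw [hQ]; field_simp; ring
  · rwa [abs_zero]

end
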